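/- Under the hypotheses of the directed-information data processing inequality, the gap satisfies I(X^T → A^T ‖ D^T, U₊^{T−1}) − I(X^T → U^T) = I(X^T ; (A^T, D^T) | U^T), which is nonnegative. -/

import Mathlib

open scoped Classical
open Finset

noncomputable def prob {Ω : Type} [Fintype Ω] (p : Ω → ℝ) (E : Ω → Prop) : ℝ :=
  ∑ ω, if E ω then p ω else 0

noncomputable def plog (q : ℝ) : ℝ := if q = 0 then 0 else -q * Real.logb 2 q

/-- Shannon entropy (in bits) of a random variable `X` on a finite space with pmf `p`. -/
noncomputable def entropy {Ω α : Type} [Fintype Ω] (p : Ω → ℝ) (X : Ω → α) : ℝ :=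
  ∑ x ∈ Finset.univ.image X, plog (prob p (fun ω => X ω = x))

/-- Conditional entropy `H(A|Z) = H(A,Z) - H(Z)` (in bits). -/
noncomputable def condEntropy {Ω α β : Type} [Fintype Ω] (p : Ω → ℝ) (A : Ω → α) (Z : Ω → β) : ℝ :=
  entropy p (fun ω => (A ω, Z ω)) - entropy p Z

/-- Mutual information `I(X;Y)` (in bits). -/
noncomputable def mutualInfo {Ω α β : Type} [Fintype Ω] (p : Ω → ℝ) (X : Ω → α) (Y : Ω → β) : ℝ :=
  entropy p X + entropy p Y - entropy p (fun ω => (X ω, Y ω))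

/-- Conditional mutual information `I(X;Y|Z) = H(X|Z) - H(X|Y,Z)` (in bits). -/
noncomputable def condMutualInfo {Ω α β γ : Type} [Fintype Ω] (p : Ω → ℝ)
    (X : Ω → α) (Y : Ω → β) (Z : Ω → γ) : ℝ :=
  condEntropy p X Z - condEntropy p X (fun ω => (Y ω, Z ω))

/-- Expected codeword length `E[ℓ(A)]`. -/
noncomputable def expLen {Ω : Type} [Fintype Ω] (p : Ω → ℝ) (A : Ω → List Bool) : ℝ :=
  ∑ ω, p ω * (A ω).length

/-- θ(x) = x + (1+x)·log₂(1+x) − x·log₂(x); note `Real.logb 2 0 = 0`, so θ(0) = 0. -/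
noncomputable def theta (x : ℝ) : ℝ :=
  x + (1 + x) * Real.logb 2 (1 + x) - x * Real.logb 2 x

/-- The inverse of θ on `[0,∞)`. -/
noncomputable def thetaInv : ℝ → ℝ := Function.invFunOn theta (Set.Ici 0)

/-- History `(X_0, …, X_{t-1})` of a discrete-time process. -/
def hist {Ω α : Type} (X : ℕ → Ω → α) (t : ℕ) (ω : Ω) : Fin t → α := fun i => X i ω

/-!
Write `𝐗, 𝐀, 𝐃, 𝐔` for the histories up to time `t` and `X', A', D', U'` for those up to `t + 1`.
Splitting `I(X'; A', D' | U')` and `I(X'; 𝐀, 𝐃 | 𝐔)` by the chain rule shows that their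
difference is `I(X'; A_t | 𝐀, D', 𝐔) - I(X'; U_t | 𝐔)` plus the three conditional mutual
informations `I(X'; D_t | 𝐀, 𝐃, 𝐔)`, `I(X'; U_t | A', D', 𝐔)` and `I(𝐀, 𝐃; X_t | 𝐗, 𝐔)`, which
vanish by (i), (ii) and (iii). Summing over `t` telescopes to the identity. Nonnegativity of
conditional mutual information is Gibbs' inequality, comparing the law of `(X, Y, Z)` with
`p(x, z) p(y, z) / p(z)` through `log r ≥ 1 - 1 / r`.
-/

open Real

section Probability

variable {Ω : Type} [Fintype Ω] (p : Ω → ℝ)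

lemma prob_congr {E F : Ω → Prop} (h : ∀ ω, E ω ↔ F ω) : prob p E = prob p F :=
  Finset.sum_congr rfl fun ω _ => by simp only [h ω]

lemma prob_eq_sum_filter (E : Ω → Prop) [DecidablePred E] :
    prob p E = ∑ ω ∈ univ.filter E, p ω := by
  simp only [prob, Finset.sum_filter]
  congr!

lemma prob_nonneg (hp : ∀ ω, 0 ≤ p ω) (E : Ω → Prop) : 0 ≤ prob p E :=
  Finset.sum_nonneg fun ω _ => by split_ifs <;> simp [hp ω]

lemma le_prob_of_mem (hp : ∀ ω, 0 ≤ p ω) {E : Ω → Prop} {ω : Ω} (hω : E ω) :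
    p ω ≤ prob p E := by
  rw [prob_eq_sum_filter]
  exact Finset.single_le_sum (fun ω _ => hp ω) (Finset.mem_filter.2 ⟨Finset.mem_univ ω, hω⟩)

lemma prob_true : prob p (fun _ => True) = ∑ ω, p ω := by
  simp [prob]

lemma sum_prob_eq_and {α : Type} (Y : Ω → α) (E : Ω → Prop) :
    ∑ y ∈ univ.image Y, prob p (fun ω => Y ω = y ∧ E ω) = prob p E := by
  rw [prob_eq_sum_filter p E, ← Finset.sum_fiberwise_of_maps_to (g := Y) (t := univ.image Y)
    fun ω _ => mem_image_of_mem Y (mem_univ ω)]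
  refine Finset.sum_congr rfl fun y _ => ?_
  rw [prob_eq_sum_filter, Finset.filter_filter]
  exact Finset.sum_congr (by ext; simp [and_comm]) fun _ _ => rfl

lemma sum_prob_eq {α : Type} (Y : Ω → α) :
    ∑ y ∈ univ.image Y, prob p (fun ω => Y ω = y) = ∑ ω, p ω := by
  rw [← prob_true, ← sum_prob_eq_and p Y]
  simp only [and_true]

lemma prob_pos_of_mem (hp : ∀ ω, 0 ≤ p ω) {E : Ω → Prop} {ω : Ω} (hω : 0 < p ω) (hE : E ω) :
    0 < prob p E :=
  hω.trans_le (le_prob_of_mem p hp hE)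

lemma sum_mul_div_prob_fiber_le (hp : ∀ ω, 0 ≤ p ω) {α : Type} [DecidableEq α] (V : Ω → α)
    (g : α → ℝ) (hg : ∀ v, 0 ≤ g v) :
    ∑ ω, p ω * (g (V ω) / prob p (fun ω' => V ω' = V ω)) ≤ ∑ v ∈ univ.image V, g v := by
  rw [← Finset.sum_fiberwise_of_maps_to (g := V) (t := univ.image V)
    fun ω _ => mem_image_of_mem V (mem_univ ω)]
  refine Finset.sum_le_sum fun v _ => ?_
  rw [Finset.sum_congr rfl fun ω hω => by rw [(Finset.mem_filter.1 hω).2], ← Finset.sum_mul,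
    ← prob_eq_sum_filter]
  rcases (prob_nonneg p hp fun ω => V ω = v).eq_or_lt with h0 | h0
  · rw [← h0, zero_mul]
    exact hg v
  · rw [mul_div_cancel₀ _ h0.ne']

end Probability

section Entropy

variable {Ω α β γ δ ε ζ : Type} [Fintype Ω] (p : Ω → ℝ)

lemma entropy_eq_sum (W : Ω → α) :
    entropy p W = ∑ ω, p ω * -logb 2 (prob p (fun ω' => W ω' = W ω)) := by
  rw [entropy, ← Finset.sum_fiberwise_of_maps_to (g := W) (t := univ.image W)
    fun ω _ => mem_image_of_mem W (mem_univ ω)]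
  refine Finset.sum_congr rfl fun w _ => ?_
  rw [Finset.sum_congr rfl fun ω hω => by rw [(Finset.mem_filter.1 hω).2], ← Finset.sum_mul,
    ← prob_eq_sum_filter, plog]
  split_ifs with h <;> simp [h]

lemma entropy_congr {V : Ω → α} {W : Ω → β} (h : ∀ ω ω', V ω = V ω' ↔ W ω = W ω') :
    entropy p V = entropy p W := by
  simp only [entropy_eq_sum, prob_congr p fun ω' => h ω' _]

lemma condMutualInfo_comm (X : Ω → α) (Y : Ω → β) (Z : Ω → γ) :
    condMutualInfo p X Y Z = condMutualInfo p Y X Z := by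
  have h : entropy p (fun ω => (X ω, Y ω, Z ω)) = entropy p (fun ω => (Y ω, X ω, Z ω)) :=
    entropy_congr p fun _ _ => by simp only [Prod.mk.injEq]; tauto
  simp only [condMutualInfo, condEntropy, h]
  ring

/-- The chain rule, with `V` standing for `(Y, W)` and `Z'` for `(W, Z)` up to relabelling. -/
lemma condMutualInfo_chain {X : Ω → α} {Y : Ω → β} {W : Ω → γ} {Z : Ω → δ} {V : Ω → ε}
    {Z' : Ω → ζ} (hV : ∀ ω ω', V ω = V ω' ↔ Y ω = Y ω' ∧ W ω = W ω')
    (hZ' : ∀ ω ω', Z' ω = Z' ω' ↔ W ω = W ω' ∧ Z ω = Z ω') :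
    condMutualInfo p X V Z = condMutualInfo p X W Z + condMutualInfo p X Y Z' := by
  have h₁ : entropy p (fun ω => (X ω, V ω, Z ω)) = entropy p (fun ω => (X ω, Y ω, Z' ω)) :=
    entropy_congr p fun _ _ => by simp only [Prod.mk.injEq, hV, hZ']; tauto
  have h₂ : entropy p (fun ω => (V ω, Z ω)) = entropy p (fun ω => (Y ω, Z' ω)) :=
    entropy_congr p fun _ _ => by simp only [Prod.mk.injEq, hV, hZ']; tauto
  have h₃ : entropy p (fun ω => (X ω, W ω, Z ω)) = entropy p (fun ω => (X ω, Z' ω)) :=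
    entropy_congr p fun _ _ => by simp only [Prod.mk.injEq, hZ']
  have h₄ : entropy p (fun ω => (W ω, Z ω)) = entropy p Z' :=
    entropy_congr p fun _ _ => by simp only [Prod.mk.injEq, hZ']
  simp only [condMutualInfo, condEntropy, h₁, h₂, h₃, h₄]
  ring

lemma condMutualInfo_eq_zero_of_subsingleton [Subsingleton α] (X : Ω → α) (Y : Ω → β)
    (Z : Ω → γ) : condMutualInfo p X Y Z = 0 := by
  have h₁ : entropy p (fun ω => (X ω, Z ω)) = entropy p Z :=
    entropy_congr p fun ω ω' => by simp [Subsingleton.elim (X ω) (X ω')]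
  have h₂ : entropy p (fun ω => (X ω, Y ω, Z ω)) = entropy p (fun ω => (Y ω, Z ω)) :=
    entropy_congr p fun ω ω' => by simp [Subsingleton.elim (X ω) (X ω')]
  simp only [condMutualInfo, condEntropy, h₁, h₂]
  ring

end Entropy

section CondMutualInfo

variable {Ω α β γ : Type} [Fintype Ω] (p : Ω → ℝ)

/-- `p(x, z) p(y, z) / p(z)`: the law of `(X, Y, Z)` if `X` and `Y` were made conditionally
independent given `Z`, keeping the laws of `(X, Z)` and `(Y, Z)`. -/
noncomputable def condIndepJoint (X : Ω → α) (Y : Ω → β) (Z : Ω → γ) (v : α × β × γ) : ℝ :=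
  prob p (fun ω => X ω = v.1 ∧ Z ω = v.2.2) * prob p (fun ω => Y ω = v.2.1 ∧ Z ω = v.2.2) /
    prob p (fun ω => Z ω = v.2.2)

variable (hp : ∀ ω, 0 ≤ p ω)
include hp

lemma condMutualInfo_eq_sum (X : Ω → α) (Y : Ω → β) (Z : Ω → γ) :
    condMutualInfo p X Y Z = ∑ ω, p ω * logb 2
      (prob p (fun ω' => (X ω', Y ω', Z ω') = (X ω, Y ω, Z ω)) /
        condIndepJoint p X Y Z (X ω, Y ω, Z ω)) := by
  simp only [condMutualInfo, condEntropy, entropy_eq_sum, ← Finset.sum_sub_distrib]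
  refine Finset.sum_congr rfl fun ω _ => ?_
  rcases (hp ω).eq_or_lt with h0 | h0
  · simp [← h0]
  have pos : ∀ E : Ω → Prop, E ω → prob p E ≠ 0 :=
    fun _ hE => (prob_pos_of_mem p hp h0 hE).ne'
  have hXYZ := pos (fun ω' => X ω' = X ω ∧ Y ω' = Y ω ∧ Z ω' = Z ω) ⟨rfl, rfl, rfl⟩
  have hXZ := pos (fun ω' => X ω' = X ω ∧ Z ω' = Z ω) ⟨rfl, rfl⟩
  have hYZ := pos (fun ω' => Y ω' = Y ω ∧ Z ω' = Z ω) ⟨rfl, rfl⟩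
  have hZ := pos (fun ω' => Z ω' = Z ω) rfl
  simp only [condIndepJoint, Prod.mk.injEq]
  rw [logb_div hXYZ (by positivity), logb_div (by positivity) hZ, logb_mul hXZ hYZ]
  ring

lemma condIndepJoint_nonneg (X : Ω → α) (Y : Ω → β) (Z : Ω → γ) (v : α × β × γ) :
    0 ≤ condIndepJoint p X Y Z v :=
  div_nonneg (mul_nonneg (prob_nonneg p hp _) (prob_nonneg p hp _)) (prob_nonneg p hp _)

lemma condIndepJoint_pos (X : Ω → α) (Y : Ω → β) (Z : Ω → γ) {ω : Ω} (hω : 0 < p ω) :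
    0 < condIndepJoint p X Y Z (X ω, Y ω, Z ω) :=
  div_pos
    (mul_pos (prob_pos_of_mem p hp (E := fun ω' => X ω' = X ω ∧ Z ω' = Z ω) hω ⟨rfl, rfl⟩)
      (prob_pos_of_mem p hp (E := fun ω' => Y ω' = Y ω ∧ Z ω' = Z ω) hω ⟨rfl, rfl⟩))
    (prob_pos_of_mem p hp (E := fun ω' => Z ω' = Z ω) hω rfl)

lemma sum_condIndepJoint_le (X : Ω → α) (Y : Ω → β) (Z : Ω → γ) :
    ∑ v ∈ univ.image (fun ω => (X ω, Y ω, Z ω)), condIndepJoint p X Y Z v ≤ ∑ ω, p ω := by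
  have hq := prob_nonneg p hp
  calc _ ≤ ∑ v ∈ univ.image X ×ˢ univ.image Y ×ˢ univ.image Z, condIndepJoint p X Y Z v := by
        refine Finset.sum_le_sum_of_subset_of_nonneg ?_ fun v _ _ => ?_
        · simp only [Finset.subset_iff, Finset.mem_image, Finset.mem_product]
          rintro _ ⟨ω, -, rfl⟩
          exact ⟨⟨ω, mem_univ ω, rfl⟩, ⟨ω, mem_univ ω, rfl⟩, ⟨ω, mem_univ ω, rfl⟩⟩
        · exact condIndepJoint_nonneg p hp X Y Z v
    _ = ∑ z ∈ univ.image Z, ∑ y ∈ univ.image Y, ∑ x ∈ univ.image X,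
          condIndepJoint p X Y Z (x, y, z) := by
        rw [Finset.sum_product, Finset.sum_comm, Finset.sum_product, Finset.sum_comm]
    _ ≤ ∑ z ∈ univ.image Z, ∑ y ∈ univ.image Y, prob p (fun ω => Y ω = y ∧ Z ω = z) := by
        refine Finset.sum_le_sum fun z _ => Finset.sum_le_sum fun y _ => ?_
        simp only [condIndepJoint, mul_comm (prob p fun ω => _ ∧ _) (prob p fun ω => Y ω = y ∧ _),
          mul_div_assoc, ← Finset.mul_sum, ← Finset.sum_div, sum_prob_eq_and]
        exact mul_le_of_le_one_right (hq _) (div_self_le_one _)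
    _ = ∑ ω, p ω := by simp only [sum_prob_eq_and, sum_prob_eq]

lemma condMutualInfo_nonneg (X : Ω → α) (Y : Ω → β) (Z : Ω → γ) :
    0 ≤ condMutualInfo p X Y Z := by
  have hlog2 : 0 < log 2 := log_pos one_lt_two
  have pointwise : ∀ ω,
      (p ω - p ω * (condIndepJoint p X Y Z (X ω, Y ω, Z ω) /
        prob p (fun ω' => (X ω', Y ω', Z ω') = (X ω, Y ω, Z ω)))) / log 2 ≤
      p ω * logb 2 (prob p (fun ω' => (X ω', Y ω', Z ω') = (X ω, Y ω, Z ω)) /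
        condIndepJoint p X Y Z (X ω, Y ω, Z ω)) := by
    intro ω
    rcases (hp ω).eq_or_lt with h0 | h0
    · simp [← h0]
    have hq := prob_pos_of_mem p hp
      (E := fun ω' => (X ω', Y ω', Z ω') = (X ω, Y ω, Z ω)) h0 rfl
    have hlog := one_sub_inv_le_log_of_pos (div_pos hq (condIndepJoint_pos p hp X Y Z h0))
    rw [inv_div] at hlog
    rw [logb, div_le_iff₀ hlog2, mul_assoc, div_mul_cancel₀ _ hlog2.ne']
    linarith [mul_le_mul_of_nonneg_left hlog h0.le]
  rw [condMutualInfo_eq_sum p hp]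
  refine le_trans ?_ (Finset.sum_le_sum fun ω _ => pointwise ω)
  rw [← Finset.sum_div, Finset.sum_sub_distrib]
  refine div_nonneg (sub_nonneg.2 ?_) hlog2.le
  exact (sum_mul_div_prob_fiber_le p hp _ _ (condIndepJoint_nonneg p hp X Y Z)).trans
    (sum_condIndepJoint_le p hp X Y Z)

lemma condMutualInfo_eq_zero_of_condIndep {X : Ω → α} {Y : Ω → β} {Z : Ω → γ}
    (h : ∀ x y z, prob p (fun ω => X ω = x ∧ Y ω = y ∧ Z ω = z) * prob p (fun ω => Z ω = z) =
      prob p (fun ω => X ω = x ∧ Z ω = z) * prob p (fun ω => Y ω = y ∧ Z ω = z)) :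
    condMutualInfo p X Y Z = 0 := by
  rw [condMutualInfo_eq_sum p hp]
  refine Finset.sum_eq_zero fun ω _ => ?_
  rcases (hp ω).eq_or_lt with h0 | h0
  · simp [← h0]
  have hZ := prob_pos_of_mem p hp (E := fun ω' => Z ω' = Z ω) h0 rfl
  have hfactor : prob p (fun ω' => (X ω', Y ω', Z ω') = (X ω, Y ω, Z ω)) =
      condIndepJoint p X Y Z (X ω, Y ω, Z ω) := by
    simp only [condIndepJoint, Prod.mk.injEq]
    rw [eq_div_iff hZ.ne', h]
  rw [hfactor, div_self (condIndepJoint_pos p hp X Y Z h0).ne', logb_one, mul_zero]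

lemma condMutualInfo_eq_zero_of_indep {X : Ω → α} {Y : Ω → β} {Z : Ω → γ}
    (h : ∀ y x z, prob p (fun ω => Y ω = y ∧ X ω = x ∧ Z ω = z) =
      prob p (fun ω => Y ω = y) * prob p (fun ω => X ω = x ∧ Z ω = z)) :
    condMutualInfo p X Y Z = 0 := by
  refine condMutualInfo_eq_zero_of_condIndep p hp fun x y z => ?_
  have hXYZ : prob p (fun ω => X ω = x ∧ Y ω = y ∧ Z ω = z) =
      prob p (fun ω => Y ω = y ∧ X ω = x ∧ Z ω = z) :=
    prob_congr p fun _ => and_left_comm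
  have hYZ : prob p (fun ω => Y ω = y ∧ Z ω = z) =
      prob p (fun ω => Y ω = y) * prob p (fun ω => Z ω = z) := by
    rw [← sum_prob_eq_and p X (fun ω => Y ω = y ∧ Z ω = z),
      ← sum_prob_eq_and p X (fun ω => Z ω = z), Finset.mul_sum]
    refine Finset.sum_congr rfl fun x _ => ?_
    rw [← h]
    exact prob_congr p fun _ => and_left_comm
  rw [hXYZ, h, hYZ]
  ring

end CondMutualInfo

lemma hist_succ_eq_iff {Ω α : Type} (W : ℕ → Ω → α) (t : ℕ) (ω ω' : Ω) :
    hist W (t + 1) ω = hist W (t + 1) ω' ↔ hist W t ω = hist W t ω' ∧ W t ω = W t ω' := by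
  simp only [hist, funext_iff, Fin.forall_fin_succ', Fin.val_castSucc, Fin.val_last]

section Processes

variable {Ω α β γ δ : Type} [Fintype Ω] (p : Ω → ℝ)
  (X : ℕ → Ω → α) (A : ℕ → Ω → β) (D : ℕ → Ω → γ) (U : ℕ → Ω → δ) (t : ℕ)

lemma condMutualInfo_hist_succ
    (hD : condMutualInfo p (hist X (t + 1)) (D t)
      (fun ω => (hist A t ω, hist D t ω, hist U t ω)) = 0)
    (hU : condMutualInfo p (hist X (t + 1)) (U t)
      (fun ω => (hist A (t + 1) ω, hist D (t + 1) ω, hist U t ω)) = 0)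
    (hX : condMutualInfo p (fun ω => (hist A t ω, hist D t ω)) (X t)
      (fun ω => (hist X t ω, hist U t ω)) = 0) :
    condMutualInfo p (hist X (t + 1)) (A t)
        (fun ω => (hist A t ω, hist D (t + 1) ω, hist U t ω)) -
      condMutualInfo p (hist X (t + 1)) (U t) (hist U t) =
    condMutualInfo p (hist X (t + 1))
        (fun ω => (hist A (t + 1) ω, hist D (t + 1) ω)) (hist U (t + 1)) -
      condMutualInfo p (hist X t) (fun ω => (hist A t ω, hist D t ω)) (hist U t) := by
  have chainU₁ := condMutualInfo_chain p (X := hist X (t + 1)) (Z := hist U t)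
    (V := fun ω => (hist A (t + 1) ω, hist D (t + 1) ω, U t ω))
    (Y := fun ω => (hist A (t + 1) ω, hist D (t + 1) ω)) (W := U t) (Z' := hist U (t + 1))
    (fun _ _ => by simp only [Prod.mk.injEq]; tauto)
    (fun _ _ => by simp only [hist_succ_eq_iff]; tauto)
  have chainU₂ := condMutualInfo_chain p (X := hist X (t + 1)) (Z := hist U t)
    (V := fun ω => (hist A (t + 1) ω, hist D (t + 1) ω, U t ω))
    (Y := U t) (W := fun ω => (hist A (t + 1) ω, hist D (t + 1) ω))
    (Z' := fun ω => (hist A (t + 1) ω, hist D (t + 1) ω, hist U t ω))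
    (fun _ _ => by simp only [Prod.mk.injEq]; tauto)
    (fun _ _ => by simp only [Prod.mk.injEq]; tauto)
  have chainA := condMutualInfo_chain p (X := hist X (t + 1)) (Z := hist U t)
    (V := fun ω => (hist A (t + 1) ω, hist D (t + 1) ω))
    (Y := A t) (W := fun ω => (hist A t ω, hist D (t + 1) ω))
    (Z' := fun ω => (hist A t ω, hist D (t + 1) ω, hist U t ω))
    (fun _ _ => by simp only [Prod.mk.injEq, hist_succ_eq_iff]; tauto)
    (fun _ _ => by simp only [Prod.mk.injEq]; tauto)
  have chainD := condMutualInfo_chain p (X := hist X (t + 1)) (Z := hist U t)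
    (V := fun ω => (hist A t ω, hist D (t + 1) ω))
    (Y := D t) (W := fun ω => (hist A t ω, hist D t ω))
    (Z' := fun ω => (hist A t ω, hist D t ω, hist U t ω))
    (fun _ _ => by simp only [Prod.mk.injEq, hist_succ_eq_iff]; tauto)
    (fun _ _ => by simp only [Prod.mk.injEq]; tauto)
  have chainX : condMutualInfo p (hist X (t + 1)) (fun ω => (hist A t ω, hist D t ω)) (hist U t) =
      condMutualInfo p (hist X t) (fun ω => (hist A t ω, hist D t ω)) (hist U t) +
        condMutualInfo p (fun ω => (hist A t ω, hist D t ω)) (X t)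
          (fun ω => (hist X t ω, hist U t ω)) := by
    rw [condMutualInfo_comm p (hist X (t + 1)), condMutualInfo_comm p (hist X t)]
    exact condMutualInfo_chain p (fun _ _ => by simp only [hist_succ_eq_iff]; tauto)
      (fun _ _ => by simp only [Prod.mk.injEq])
  linarith

end Processes

theorem directed_info_gap_general {Ω α β γ δ : Type} [Fintype Ω]
    (p : Ω → ℝ) (hp : ∀ ω, 0 ≤ p ω) (T : ℕ)
    (X : ℕ → Ω → α) (A : ℕ → Ω → β) (D : ℕ → Ω → γ) (U : ℕ → Ω → δ)
(hD : ∀ t : ℕ, ∀ (d : γ) (v : (Fin t → β) × (Fin t → γ) × (Fin t → δ) × (Fin (t + 1) → α)),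
      prob p (fun ω => D t ω = d ∧ (hist A t ω, hist D t ω, hist U t ω, hist X (t + 1) ω) = v) =
        prob p (fun ω => D t ω = d) *
          prob p (fun ω => (hist A t ω, hist D t ω, hist U t ω, hist X (t + 1) ω) = v))
    (hU : ∀ t : ℕ, ∀ (x : Fin (t + 1) → α) (v : δ)
        (z : (Fin (t + 1) → β) × (Fin (t + 1) → γ) × (Fin t → δ)),
      prob p (fun ω => hist X (t + 1) ω = x ∧ U t ω = v ∧
            (hist A (t + 1) ω, hist D (t + 1) ω, hist U t ω) = z) *
          prob p (fun ω => (hist A (t + 1) ω, hist D (t + 1) ω, hist U t ω) = z) =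
        prob p (fun ω => hist X (t + 1) ω = x ∧
            (hist A (t + 1) ω, hist D (t + 1) ω, hist U t ω) = z) *
          prob p (fun ω => U t ω = v ∧ (hist A (t + 1) ω, hist D (t + 1) ω, hist U t ω) = z))
    (hX : ∀ t : ℕ, ∀ (v : (Fin t → β) × (Fin t → γ)) (x : α) (z : (Fin t → α) × (Fin t → δ)),
      prob p (fun ω => (hist A t ω, hist D t ω) = v ∧ X t ω = x ∧ (hist X t ω, hist U t ω) = z) *
          prob p (fun ω => (hist X t ω, hist U t ω) = z) =
        prob p (fun ω => (hist A t ω, hist D t ω) = v ∧ (hist X t ω, hist U t ω) = z) *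
          prob p (fun ω => X t ω = x ∧ (hist X t ω, hist U t ω) = z)) :
    (∑ t ∈ Finset.range (T + 1),
        condMutualInfo p (hist X (t + 1)) (A t)
          (fun ω => (hist A t ω, hist D (t + 1) ω, hist U t ω))) -
      (∑ t ∈ Finset.range (T + 1),
        condMutualInfo p (hist X (t + 1)) (U t) (hist U t)) =
      condMutualInfo p (hist X (T + 1))
        (fun ω => (hist A (T + 1) ω, hist D (T + 1) ω)) (hist U (T + 1)) ∧
    0 ≤ condMutualInfo p (hist X (T + 1))
        (fun ω => (hist A (T + 1) ω, hist D (T + 1) ω)) (hist U (T + 1)) := by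
  have hD' : ∀ t, condMutualInfo p (hist X (t + 1)) (D t)
      (fun ω => (hist A t ω, hist D t ω, hist U t ω)) = 0 := fun t =>
    condMutualInfo_eq_zero_of_indep p hp fun d x z => by
      have hv : ∀ ω, (hist A t ω, hist D t ω, hist U t ω, hist X (t + 1) ω) =
          (z.1, z.2.1, z.2.2, x) ↔
          hist X (t + 1) ω = x ∧ (hist A t ω, hist D t ω, hist U t ω) = z :=
        fun ω => by simp only [Prod.ext_iff]; tauto
      simpa only [hv] using hD t d (z.1, z.2.1, z.2.2, x)
  refine ⟨?_, condMutualInfo_nonneg p hp _ _ _⟩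
  rw [← Finset.sum_sub_distrib, Finset.sum_congr rfl fun t _ =>
      condMutualInfo_hist_succ p X A D U t (hD' t)
        (condMutualInfo_eq_zero_of_condIndep p hp (hU t))
        (condMutualInfo_eq_zero_of_condIndep p hp (hX t)),
    Finset.sum_range_sub (fun s => condMutualInfo p (hist X s)
      (fun ω => (hist A s ω, hist D s ω)) (hist U s)),
    condMutualInfo_eq_zero_of_subsingleton p (hist X 0), sub_zero]

/-- The gap in the directed-information DPI equals `I(X^T ; (A^T, D^T) | U^T) ≥ 0`. -/
theorem directed_info_gap {Ω α β γ δ : Type} [Fintype Ω]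
    (p : Ω → ℝ) (hp : ∀ ω, 0 ≤ p ω) (hsum : ∑ ω, p ω = 1) (T : ℕ)
    (X : ℕ → Ω → α) (A : ℕ → Ω → β) (D : ℕ → Ω → γ) (U : ℕ → Ω → δ)
(hD : ∀ t : ℕ, ∀ (d : γ) (v : (Fin t → β) × (Fin t → γ) × (Fin t → δ) × (Fin (t + 1) → α)),
      prob p (fun ω => D t ω = d ∧ (hist A t ω, hist D t ω, hist U t ω, hist X (t + 1) ω) = v) =
        prob p (fun ω => D t ω = d) *
          prob p (fun ω => (hist A t ω, hist D t ω, hist U t ω, hist X (t + 1) ω) = v))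
    (hU : ∀ t : ℕ, ∀ (x : Fin (t + 1) → α) (v : δ)
        (z : (Fin (t + 1) → β) × (Fin (t + 1) → γ) × (Fin t → δ)),
      prob p (fun ω => hist X (t + 1) ω = x ∧ U t ω = v ∧
            (hist A (t + 1) ω, hist D (t + 1) ω, hist U t ω) = z) *
          prob p (fun ω => (hist A (t + 1) ω, hist D (t + 1) ω, hist U t ω) = z) =
        prob p (fun ω => hist X (t + 1) ω = x ∧
            (hist A (t + 1) ω, hist D (t + 1) ω, hist U t ω) = z) *
          prob p (fun ω => U t ω = v ∧ (hist A (t + 1) ω, hist D (t + 1) ω, hist U t ω) = z))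
    (hX : ∀ t : ℕ, ∀ (v : (Fin t → β) × (Fin t → γ)) (x : α) (z : (Fin t → α) × (Fin t → δ)),
      prob p (fun ω => (hist A t ω, hist D t ω) = v ∧ X t ω = x ∧ (hist X t ω, hist U t ω) = z) *
          prob p (fun ω => (hist X t ω, hist U t ω) = z) =
        prob p (fun ω => (hist A t ω, hist D t ω) = v ∧ (hist X t ω, hist U t ω) = z) *
          prob p (fun ω => X t ω = x ∧ (hist X t ω, hist U t ω) = z)) :
    (∑ t ∈ Finset.range (T + 1),
        condMutualInfo p (hist X (t + 1)) (A t)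
          (fun ω => (hist A t ω, hist D (t + 1) ω, hist U t ω))) -
      (∑ t ∈ Finset.range (T + 1),
        condMutualInfo p (hist X (t + 1)) (U t) (hist U t)) =
      condMutualInfo p (hist X (T + 1))
        (fun ω => (hist A (T + 1) ω, hist D (T + 1) ω)) (hist U (T + 1)) ∧
    0 ≤ condMutualInfo p (hist X (T + 1))
        (fun ω => (hist A (T + 1) ω, hist D (T + 1) ω)) (hist U (T + 1)) :=
  directed_info_gap_general p hp T X A D U hD hU hX
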